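/- Let s be a node of the Stern–Brocot tree and t its positive child; let t₊ and t₋ denote the positive and negative children of t. Then σ(t₊) = σ(t)·σ(s)⁻¹·σ(t) and σ(t₋) = σ(t)·ρ·υ·σ(s). Symmetrically, if t is the negative child of s, then σ(t₋) = σ(t)·σ(s)⁻¹·σ(t) and σ(t₊) = σ(t)·υ·ρ·σ(s). In particular, the label (σ(s), σ(t), ε) of a tree edge uniquely determines the labels of the two edges leaving t. -/

import Mathlib

/-- The alphabet `{r, u}` of cube rolls: `r` = right roll, `u` = up roll. -/
inductive Letter
  | r : Letter
  | u : Letter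
  deriving DecidableEq

/-- The times `t ∈ (0,1)` at which the segment `t ↦ (t·a, t·b)` crosses a grid line:
`t = k/a` (crossing the vertical line `x = k`) for `1 ≤ k ≤ a−1`, and `t = i/b`
(crossing the horizontal line `y = i`) for `1 ≤ i ≤ b−1`. -/
def crossingTimes (a b : ℕ) : Finset ℚ :=
  ((Finset.Icc 1 (a - 1)).image fun k : ℕ => (k : ℚ) / (a : ℚ)) ∪
    ((Finset.Icc 1 (b - 1)).image fun i : ℕ => (i : ℚ) / (b : ℚ))

/-- The tumble sequence `τ(a,b)`: the word over `{r, u}` obtained by recording, in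
increasing order of the crossing times `t` of the segment `t ↦ (t·a, t·b)`, a letter
`r` at each crossing `t = k/a` of a vertical line and a letter `u` at each crossing
`t = i/b` of a horizontal line. -/
def tumbleWord (a b : ℕ) : List Letter :=
  ((crossingTimes a b).sort (· ≤ ·)).map fun t =>
    if (t * (a : ℚ)).den = 1 then Letter.r else Letter.u

/-- One step of the Stern–Brocot recursion on triples `(g, g⁺, g⁻)`:
`true` (the letter `+`) sends `(g, g⁺, g⁻)` to `(g + g⁺, g⁺, g)`, and
`false` (the letter `−`) sends `(g, g⁺, g⁻)` to `(g + g⁻, g, g⁻)`. -/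
def sbStep : (ℕ × ℕ) × (ℕ × ℕ) × (ℕ × ℕ) → Bool → (ℕ × ℕ) × (ℕ × ℕ) × (ℕ × ℕ)
  | (g, gp, _gm), true => (g + gp, gp, g)
  | (g, _gp, gm), false => (g + gm, g, gm)

/-- The Stern–Brocot triple `(g(w), g⁺(w), g⁻(w))` of the node indexed by the word `w`
over `{+, −}` (`true` = `+`, `false` = `−`), starting from
`(g(ε), g⁺(ε), g⁻(ε)) = ((1,1), (0,1), (1,0))`. -/
def sb (w : List Bool) : (ℕ × ℕ) × (ℕ × ℕ) × (ℕ × ℕ) :=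
  w.foldl sbStep ((1, 1), (0, 1), (1, 0))

/-- The permutation of `{0,1,2,3}` given in one-line notation by
`f 0, f 1, f 2, f 3`. -/
def ol (f : Fin 4 → Fin 4) (h : Function.Bijective f := by decide) :
    Equiv.Perm (Fin 4) :=
  ⟨f, Fintype.bijInv h, Fintype.leftInverse_bijInv h, Fintype.rightInverse_bijInv h⟩

/-- `ρ = 1230`, the permutation `0↦1, 1↦2, 2↦3, 3↦0` (a right roll). -/
def ρ : Equiv.Perm (Fin 4) := ol ![1, 2, 3, 0]

/-- `υ = 2310`, the permutation `0↦2, 1↦3, 2↦1, 3↦0` (an up roll). -/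
def υ : Equiv.Perm (Fin 4) := ol ![2, 3, 1, 0]

/-- The permutation associated to a letter: `r ↦ ρ`, `u ↦ υ`. -/
def toPerm : Letter → Equiv.Perm (Fin 4)
  | Letter.r => ρ
  | Letter.u => υ

/-- The orientation of a word over `{r, u}`: its image under the monoid homomorphism
into `S₄` sending `r ↦ ρ` and `u ↦ υ`, composed left-to-right (the leftmost letter
acts first).  Note that in Mathlib `(f * g) x = f (g x)`, so the left-to-right
product of a word is accumulated by multiplying each new letter on the left. -/
def orient (l : List Letter) : Equiv.Perm (Fin 4) :=
  l.foldl (fun acc x => toPerm x * acc) 1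

/-- `σ` on pairs of nonnegative integers: `σ((0,1)) = ρ⁻¹`, `σ((1,0)) = υ⁻¹`, and
`σ((a,b))` is the orientation of the tumble sequence `τ(a,b)` otherwise. -/
def sigmaPt (p : ℕ × ℕ) : Equiv.Perm (Fin 4) :=
  if p = (0, 1) then ρ⁻¹
  else if p = (1, 0) then υ⁻¹
  else orient (tumbleWord p.1 p.2)

/-- The cube orientation `σ(g(w))` associated to the Stern–Brocot node indexed by the
word `w`. -/
def σnode (w : List Bool) : Equiv.Perm (Fin 4) :=
  sigmaPt (sb w).1

/-!
Write `F p = υ * σ p * ρ` for the orientation of the whole lattice path `r · τ(p) · u` to `p`.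
If `c f - d e = 1`, no lattice point lies strictly between the segments to `(c, d)` and to
`(c + e, d + f)`, so the path to `(c + e, d + f)` is the path to `(c, d)` followed by the
translated path to `(e, f)`, and `F` is multiplicative along the splitting. Every Stern–Brocot
triple has `g = g⁺ + g⁻` and `det (g⁻, g⁺) = 1`, hence `F g = F g⁺ * F g⁻`, and the four
grandchild formulas become group identities in `P = F g⁺` and `N = F g⁻`. Three hold in any
group; the fourth needs the commutator of `N⁻¹` and `P`, which is the same at every node as at
the root, where `(N, P) = (ρ, υ)`.
-/

lemma orient_foldl (l : List Letter) (g : Equiv.Perm (Fin 4)) :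
    l.foldl (fun acc x => toPerm x * acc) g = orient l * g := by
  induction l generalizing g with
  | nil => exact (one_mul g).symm
  | cons x l ih =>
    simp only [orient, List.foldl_cons]
    rw [ih, ih (toPerm x * 1), mul_one, mul_assoc]

lemma orient_append (l₁ l₂ : List Letter) : orient (l₁ ++ l₂) = orient l₂ * orient l₁ := by
  rw [orient, List.foldl_append, orient_foldl]
  rfl

lemma orient_replicate (n : ℕ) (x : Letter) : orient (List.replicate n x) = toPerm x ^ n := by
  induction n with
  | zero => rfl
  | succ n ih => rw [List.replicate_succ', orient_append, ih, pow_succ']; rfl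

def crossingLetter (a : ℕ) (t : ℚ) : Letter :=
  if (t * a).den = 1 then Letter.r else Letter.u

lemma tumbleWord_eq_map (a b : ℕ) :
    tumbleWord a b = ((crossingTimes a b).sort (· ≤ ·)).map (crossingLetter a) :=
  rfl

lemma crossingLetter_div_self {a : ℕ} (ha : a ≠ 0) (k : ℕ) :
    crossingLetter a ((k : ℚ) / a) = Letter.r := by
  rw [crossingLetter, div_mul_cancel₀ _ (Nat.cast_ne_zero.2 ha), if_pos (Rat.den_natCast k)]

lemma crossingLetter_div_of_coprime {a b i : ℕ} (hab : a.Coprime b) (hi : 0 < i) (hib : i < b) :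
    crossingLetter a ((i : ℚ) / b) = Letter.u := by
  have hb : b ≠ 0 := by omega
  rw [crossingLetter, if_neg]
  rw [div_mul_eq_mul_div, ← Nat.cast_mul, Rat.den_div_natCast_eq_one_iff _ _ hb]
  intro hdvd
  exact absurd (Nat.le_of_dvd hi (hab.symm.dvd_of_dvd_mul_right hdvd)) (by omega)

lemma mem_crossingTimes {a b : ℕ} {x : ℚ} :
    x ∈ crossingTimes a b ↔
      (∃ k, 1 ≤ k ∧ k < a ∧ x = (k : ℚ) / a) ∨ (∃ i, 1 ≤ i ∧ i < b ∧ x = (i : ℚ) / b) := by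
  simp only [crossingTimes, Finset.mem_union, Finset.mem_image, Finset.mem_Icc]
  constructor
  · rintro (⟨k, hk, rfl⟩ | ⟨i, hi, rfl⟩)
    exacts [Or.inl ⟨k, by omega, by omega, rfl⟩, Or.inr ⟨i, by omega, by omega, rfl⟩]
  · rintro (⟨k, hk₁, hk₂, rfl⟩ | ⟨i, hi₁, hi₂, rfl⟩)
    exacts [Or.inl ⟨k, by omega, rfl⟩, Or.inr ⟨i, by omega, rfl⟩]

lemma card_image_div_Icc (n : ℕ) :
    ((Finset.Icc 1 (n - 1)).image fun k : ℕ => (k : ℚ) / n).card = n - 1 := by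
  rcases Nat.eq_zero_or_pos n with rfl | hn
  · simp
  · rw [Finset.card_image_of_injective _
      fun x y h => Nat.cast_injective ((div_left_inj' (by positivity)).1 h), Nat.card_Icc]
    omega

lemma tumbleWord_nat_one (a : ℕ) : tumbleWord a 1 = List.replicate (a - 1) Letter.r := by
  have h : crossingTimes a 1 = (Finset.Icc 1 (a - 1)).image fun k : ℕ => (k : ℚ) / a := by
    simp [crossingTimes]
  rw [List.eq_replicate_iff, tumbleWord_eq_map, List.length_map, Finset.length_sort, h,
    card_image_div_Icc]
  refine ⟨rfl, fun x hx => ?_⟩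
  obtain ⟨t, ht, rfl⟩ := List.mem_map.1 hx
  obtain ⟨k, hk, rfl⟩ := Finset.mem_image.1 ((Finset.mem_sort _).1 ht)
  exact crossingLetter_div_self (by grind) k

lemma tumbleWord_one_nat (b : ℕ) : tumbleWord 1 b = List.replicate (b - 1) Letter.u := by
  have h : crossingTimes 1 b = (Finset.Icc 1 (b - 1)).image fun i : ℕ => (i : ℚ) / b := by
    simp [crossingTimes]
  rw [List.eq_replicate_iff, tumbleWord_eq_map, List.length_map, Finset.length_sort, h,
    card_image_div_Icc]
  refine ⟨rfl, fun x hx => ?_⟩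
  obtain ⟨t, ht, rfl⟩ := List.mem_map.1 hx
  obtain ⟨i, hi, rfl⟩ := Finset.mem_image.1 ((Finset.mem_sort _).1 ht)
  rw [Finset.mem_Icc] at hi
  exact crossingLetter_div_of_coprime (Nat.coprime_one_left b) (by omega) (by omega)

lemma sigmaPt_eq_orient {a b : ℕ} (ha : 1 ≤ a) (hb : 1 ≤ b) :
    sigmaPt (a, b) = orient (tumbleWord a b) := by
  rw [sigmaPt, if_neg (by grind), if_neg (by grind)]

/-- The orientation of `r · τ(p) · u`, the lattice path from `(0,0)` to `p`; the conventions
`σ(0,1) = ρ⁻¹` and `σ(1,0) = υ⁻¹` make the paths of the unit steps the letters `u` and `r`. -/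
def fullOrient (p : ℕ × ℕ) : Equiv.Perm (Fin 4) := υ * sigmaPt p * ρ

lemma fullOrient_nat_one (a : ℕ) : fullOrient (a, 1) = υ * ρ ^ a := by
  rcases a with _ | a
  · simp [fullOrient, sigmaPt]
  · rw [fullOrient, sigmaPt_eq_orient (by omega) le_rfl, tumbleWord_nat_one, orient_replicate,
      Nat.add_sub_cancel, pow_succ, toPerm, mul_assoc]

lemma fullOrient_one_nat (b : ℕ) : fullOrient (1, b) = υ ^ b * ρ := by
  rcases b with _ | b
  · simp [fullOrient, sigmaPt]
  · rw [fullOrient, sigmaPt_eq_orient le_rfl (by omega), tumbleWord_one_nat, orient_replicate,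
      Nat.add_sub_cancel, pow_succ', toPerm]

lemma natCast_div_lt_natCast_div_iff {n m p q : ℕ} (hm : 0 < m) (hq : 0 < q) :
    (n : ℚ) / m < (p : ℚ) / q ↔ n * q < p * m := by
  rw [div_lt_div_iff₀ (by positivity) (by positivity)]
  norm_cast

lemma Nat.coprime_of_mul_eq_mul_add_one {a b x y : ℕ} (h : a * x = b * y + 1) : a.Coprime b :=
  Nat.dvd_one.1 <| (Nat.dvd_add_right (dvd_mul_of_dvd_left (Nat.gcd_dvd_right a b) y)).1 <|
    h ▸ dvd_mul_of_dvd_left (Nat.gcd_dvd_left a b) x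

/-- A crossing of the segment to `(c,d)` seen as the corresponding crossing of the segment to
`(c + e, d + f)`. -/
def leftLift (c d e f : ℕ) (t : ℚ) : ℚ :=
  match crossingLetter c t with
  | Letter.r => t * c / (c + e : ℕ)
  | Letter.u => t * d / (d + f : ℕ)

/-- A crossing of the segment to `(e,f)`, translated by `(c,d)`, seen as the corresponding
crossing of the segment to `(c + e, d + f)`. -/
def rightLift (c d e f : ℕ) (t : ℚ) : ℚ :=
  match crossingLetter e t with
  | Letter.r => (t * e + c) / (c + e : ℕ)
  | Letter.u => (t * f + d) / (d + f : ℕ)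

lemma StrictMonoOn.pairwise_map_sort {α β : Type*} [LinearOrder α] [LinearOrder β]
    {f : α → β} {s : Finset α} (hf : StrictMonoOn f s) :
    ((s.sort (· ≤ ·)).map f).Pairwise (· < ·) :=
  List.pairwise_map.2 <| (Finset.sortedLT_sort s).pairwise.imp_of_mem fun hx hy hxy =>
    hf ((Finset.mem_sort _).1 hx) ((Finset.mem_sort _).1 hy) hxy

section Splice

variable {c d e f : ℕ}

lemma one_le_left_of_det (hdet : c * f = d * e + 1) : 1 ≤ c := by
  rcases c with _ | c <;> simp_all

lemma one_le_right_of_det (hdet : c * f = d * e + 1) : 1 ≤ f := by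
  rcases f with _ | f <;> simp_all

lemma coprime_left_of_det (hdet : c * f = d * e + 1) : c.Coprime d :=
  Nat.coprime_of_mul_eq_mul_add_one hdet

lemma coprime_right_of_det (hdet : c * f = d * e + 1) : e.Coprime f :=
  (Nat.coprime_of_mul_eq_mul_add_one (by rw [mul_comm, hdet]; ring)).symm

lemma coprime_add_of_det (hdet : c * f = d * e + 1) : (c + e).Coprime (d + f) :=
  Nat.coprime_of_mul_eq_mul_add_one (x := f) (y := e) (by rw [add_mul, hdet]; ring)

lemma leftLift_div_left (hc : c ≠ 0) (k : ℕ) :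
    leftLift c d e f ((k : ℚ) / c) = (k : ℚ) / (c + e : ℕ) := by
  rw [leftLift, crossingLetter_div_self hc, div_mul_cancel₀ _ (Nat.cast_ne_zero.2 hc)]

lemma leftLift_div_right (hdet : c * f = d * e + 1) {i : ℕ} (hi : 0 < i) (hid : i < d) :
    leftLift c d e f ((i : ℚ) / d) = (i : ℚ) / (d + f : ℕ) := by
  rw [leftLift, crossingLetter_div_of_coprime (coprime_left_of_det hdet) hi hid,
    div_mul_cancel₀ _ (Nat.cast_ne_zero.2 (by omega))]

lemma rightLift_div_left (he : e ≠ 0) (k : ℕ) :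
    rightLift c d e f ((k : ℚ) / e) = ((k + c : ℕ) : ℚ) / (c + e : ℕ) := by
  rw [rightLift, crossingLetter_div_self he, div_mul_cancel₀ _ (Nat.cast_ne_zero.2 he)]
  push_cast
  rfl

lemma rightLift_div_right (hdet : c * f = d * e + 1) {i : ℕ} (hi : 0 < i) (hif : i < f) :
    rightLift c d e f ((i : ℚ) / f) = ((i + d : ℕ) : ℚ) / (d + f : ℕ) := by
  rw [rightLift, crossingLetter_div_of_coprime (coprime_right_of_det hdet) hi hif,
    div_mul_cancel₀ _ (Nat.cast_ne_zero.2 (by omega))]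
  push_cast
  rfl

lemma leftLift_of_mem (hdet : c * f = d * e + 1) {t : ℚ} (ht : t ∈ crossingTimes c d) :
    (∃ k, 1 ≤ k ∧ k < c ∧ t = (k : ℚ) / c ∧ leftLift c d e f t = (k : ℚ) / (c + e : ℕ)) ∨
      (∃ i, 1 ≤ i ∧ i < d ∧ t = (i : ℚ) / d ∧ leftLift c d e f t = (i : ℚ) / (d + f : ℕ)) := by
  rcases mem_crossingTimes.1 ht with ⟨k, hk₁, hk₂, rfl⟩ | ⟨i, hi₁, hi₂, rfl⟩
  · exact Or.inl ⟨k, hk₁, hk₂, rfl, leftLift_div_left (by omega) k⟩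
  · exact Or.inr ⟨i, hi₁, hi₂, rfl, leftLift_div_right hdet hi₁ hi₂⟩

lemma rightLift_of_mem (hdet : c * f = d * e + 1) {t : ℚ} (ht : t ∈ crossingTimes e f) :
    (∃ k, 1 ≤ k ∧ k < e ∧ t = (k : ℚ) / e ∧
        rightLift c d e f t = ((k + c : ℕ) : ℚ) / (c + e : ℕ)) ∨
      (∃ i, 1 ≤ i ∧ i < f ∧ t = (i : ℚ) / f ∧
        rightLift c d e f t = ((i + d : ℕ) : ℚ) / (d + f : ℕ)) := by
  rcases mem_crossingTimes.1 ht with ⟨k, hk₁, hk₂, rfl⟩ | ⟨i, hi₁, hi₂, rfl⟩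
  · exact Or.inl ⟨k, hk₁, hk₂, rfl, rightLift_div_left (by omega) k⟩
  · exact Or.inr ⟨i, hi₁, hi₂, rfl, rightLift_div_right hdet hi₁ hi₂⟩

lemma strictMonoOn_leftLift (hdet : c * f = d * e + 1) :
    StrictMonoOn (leftLift c d e f) (crossingTimes c d) := by
  intro x hx y hy hxy
  -- with `a = c + e`, `b = d + f`: `d (k b - i a) = b (k d - i c) + i` and `0 < i < b`
  rcases leftLift_of_mem hdet hx with ⟨k, hk₁, hk₂, rfl, hx'⟩ | ⟨i, hi₁, hi₂, rfl, hx'⟩ <;>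
    rcases leftLift_of_mem hdet hy with ⟨k', hk₁', hk₂', rfl, hy'⟩ | ⟨i', hi₁', hi₂', rfl, hy'⟩ <;>
    rw [hx', hy', natCast_div_lt_natCast_div_iff (by omega) (by omega)] <;>
    rw [natCast_div_lt_natCast_div_iff (by omega) (by omega)] at hxy <;>
    nlinarith

lemma strictMonoOn_rightLift (hdet : c * f = d * e + 1) :
    StrictMonoOn (rightLift c d e f) (crossingTimes e f) := by
  intro x hx y hy hxy
  -- `f ((k + c) b - (i + d) a) = b (k f - i e) + (f - i)` and `0 < f - i < b`
  rcases rightLift_of_mem hdet hx with ⟨k, hk₁, hk₂, rfl, hx'⟩ | ⟨i, hi₁, hi₂, rfl, hx'⟩ <;>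
    rcases rightLift_of_mem hdet hy with ⟨k', hk₁', hk₂', rfl, hy'⟩ | ⟨i', hi₁', hi₂', rfl, hy'⟩ <;>
    rw [hx', hy', natCast_div_lt_natCast_div_iff (by omega) (by omega)] <;>
    rw [natCast_div_lt_natCast_div_iff (by omega) (by omega)] at hxy <;>
    nlinarith

lemma leftLift_lt (hdet : c * f = d * e + 1) {t : ℚ}
    (ht : t ∈ crossingTimes c d) : leftLift c d e f t < (d : ℚ) / (d + f : ℕ) := by
  have := one_le_right_of_det hdet
  rcases leftLift_of_mem hdet ht with ⟨k, hk₁, hk₂, -, h⟩ | ⟨i, hi₁, hi₂, -, h⟩ <;>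
    rw [h, natCast_div_lt_natCast_div_iff (by omega) (by omega)]
  · nlinarith [Nat.mul_le_mul_right (d + f) (show k + 1 ≤ c by omega)]
  · nlinarith

lemma div_lt_div_of_det (hdet : c * f = d * e + 1) :
    (d : ℚ) / (d + f : ℕ) < (c : ℚ) / (c + e : ℕ) := by
  have := one_le_left_of_det hdet
  have := one_le_right_of_det hdet
  rw [natCast_div_lt_natCast_div_iff (by omega) (by omega)]
  nlinarith

lemma lt_rightLift (hdet : c * f = d * e + 1) {t : ℚ} (ht : t ∈ crossingTimes e f) :
    (c : ℚ) / (c + e : ℕ) < rightLift c d e f t := by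
  have := one_le_left_of_det hdet
  rcases rightLift_of_mem hdet ht with ⟨k, hk₁, hk₂, -, h⟩ | ⟨i, hi₁, hi₂, -, h⟩ <;>
    rw [h, natCast_div_lt_natCast_div_iff (by omega) (by omega)]
  · nlinarith
  · nlinarith [Nat.mul_le_mul hi₁ this]

lemma mem_crossingTimes_add_iff (hdet : c * f = d * e + 1) (hd : 1 ≤ d) (he : 1 ≤ e)
    {x : ℚ} :
    x ∈ crossingTimes (c + e) (d + f) ↔
      (∃ t ∈ crossingTimes c d, leftLift c d e f t = x) ∨ x = (d : ℚ) / (d + f : ℕ) ∨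
        x = (c : ℚ) / (c + e : ℕ) ∨ ∃ t ∈ crossingTimes e f, rightLift c d e f t = x := by
  have hc := one_le_left_of_det hdet
  have hf := one_le_right_of_det hdet
  constructor
  · rw [mem_crossingTimes]
    rintro (⟨k, hk₁, hk₂, rfl⟩ | ⟨i, hi₁, hi₂, rfl⟩)
    · rcases lt_trichotomy k c with hkc | rfl | hck
      · exact Or.inl ⟨_, mem_crossingTimes.2 (Or.inl ⟨k, hk₁, hkc, rfl⟩),
          leftLift_div_left (by omega) k⟩
      · exact Or.inr <| Or.inr <| Or.inl rfl
      · refine Or.inr <| Or.inr <| Or.inr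
          ⟨_, mem_crossingTimes.2 (Or.inl ⟨k - c, by omega, by omega, rfl⟩), ?_⟩
        rw [rightLift_div_left (by omega), Nat.sub_add_cancel hck.le]
    · rcases lt_trichotomy i d with hid | rfl | hdi
      · exact Or.inl ⟨_, mem_crossingTimes.2 (Or.inr ⟨i, hi₁, hid, rfl⟩),
          leftLift_div_right hdet hi₁ hid⟩
      · exact Or.inr <| Or.inl rfl
      · refine Or.inr <| Or.inr <| Or.inr
          ⟨_, mem_crossingTimes.2 (Or.inr ⟨i - d, by omega, by omega, rfl⟩), ?_⟩
        rw [rightLift_div_right hdet (by omega) (by omega), Nat.sub_add_cancel hdi.le]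
  · rintro (⟨t, ht, rfl⟩ | rfl | rfl | ⟨t, ht, rfl⟩)
    · rcases leftLift_of_mem hdet ht with ⟨k, hk₁, hk₂, -, h⟩ | ⟨i, hi₁, hi₂, -, h⟩ <;>
        rw [h, mem_crossingTimes]
      exacts [Or.inl ⟨k, hk₁, by omega, rfl⟩, Or.inr ⟨i, hi₁, by omega, rfl⟩]
    · exact mem_crossingTimes.2 (Or.inr ⟨d, hd, by omega, rfl⟩)
    · exact mem_crossingTimes.2 (Or.inl ⟨c, hc, by omega, rfl⟩)
    · rcases rightLift_of_mem hdet ht with ⟨k, hk₁, hk₂, -, h⟩ | ⟨i, hi₁, hi₂, -, h⟩ <;>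
        rw [h, mem_crossingTimes]
      exacts [Or.inl ⟨k + c, by omega, by omega, rfl⟩, Or.inr ⟨i + d, by omega, by omega, rfl⟩]

lemma sort_crossingTimes_add (hdet : c * f = d * e + 1) (hd : 1 ≤ d) (he : 1 ≤ e) :
    (crossingTimes (c + e) (d + f)).sort (· ≤ ·) =
      ((crossingTimes c d).sort (· ≤ ·)).map (leftLift c d e f) ++
        (d : ℚ) / (d + f : ℕ) :: (c : ℚ) / (c + e : ℕ) ::
          ((crossingTimes e f).sort (· ≤ ·)).map (rightLift c d e f) := by
  set T := ((crossingTimes c d).sort (· ≤ ·)).map (leftLift c d e f) ++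
    (d : ℚ) / (d + f : ℕ) :: (c : ℚ) / (c + e : ℕ) ::
      ((crossingTimes e f).sort (· ≤ ·)).map (rightLift c d e f)
  have hsorted : T.Pairwise (· < ·) := by
    have hmid := div_lt_div_of_det hdet
    simp only [T, List.pairwise_append, List.pairwise_cons, List.mem_cons, List.mem_map,
      Finset.mem_sort]
    refine ⟨(strictMonoOn_leftLift hdet).pairwise_map_sort,
      ⟨?_, fun y hy => ?_, (strictMonoOn_rightLift hdet).pairwise_map_sort⟩, ?_⟩
    · rintro y (rfl | ⟨t, ht, rfl⟩)
      exacts [hmid, hmid.trans (lt_rightLift hdet ht)]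
    · obtain ⟨t, ht, rfl⟩ := hy
      exact lt_rightLift hdet ht
    · rintro _ ⟨s, hs, rfl⟩ y (rfl | rfl | ⟨t, ht, rfl⟩)
      exacts [leftLift_lt hdet hs, (leftLift_lt hdet hs).trans hmid,
        ((leftLift_lt hdet hs).trans hmid).trans (lt_rightLift hdet ht)]
  have hT : crossingTimes (c + e) (d + f) = T.toFinset := by
    ext x
    simp only [T, List.mem_toFinset, List.mem_append, List.mem_cons, List.mem_map,
      Finset.mem_sort, mem_crossingTimes_add_iff hdet hd he]
  rw [hT, List.toFinset_sort _ hsorted.nodup]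
  exact hsorted.imp le_of_lt

lemma crossingLetter_leftLift (hdet : c * f = d * e + 1) {t : ℚ} (ht : t ∈ crossingTimes c d) :
    crossingLetter (c + e) (leftLift c d e f t) = crossingLetter c t := by
  rcases leftLift_of_mem hdet ht with ⟨k, hk₁, hk₂, rfl, h⟩ | ⟨i, hi₁, hi₂, rfl, h⟩ <;> rw [h]
  · rw [crossingLetter_div_self (by omega), crossingLetter_div_self (by omega)]
  · rw [crossingLetter_div_of_coprime (coprime_add_of_det hdet) hi₁ (by omega),
      crossingLetter_div_of_coprime (coprime_left_of_det hdet) hi₁ hi₂]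

lemma crossingLetter_rightLift (hdet : c * f = d * e + 1) {t : ℚ} (ht : t ∈ crossingTimes e f) :
    crossingLetter (c + e) (rightLift c d e f t) = crossingLetter e t := by
  rcases rightLift_of_mem hdet ht with ⟨k, hk₁, hk₂, rfl, h⟩ | ⟨i, hi₁, hi₂, rfl, h⟩ <;> rw [h]
  · rw [crossingLetter_div_self (by omega), crossingLetter_div_self (by omega)]
  · rw [crossingLetter_div_of_coprime (coprime_add_of_det hdet) (by omega) (by omega),
      crossingLetter_div_of_coprime (coprime_right_of_det hdet) hi₁ hi₂]

lemma tumbleWord_add (hdet : c * f = d * e + 1) (hd : 1 ≤ d) (he : 1 ≤ e) :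
    tumbleWord (c + e) (d + f) = tumbleWord c d ++ [Letter.u, Letter.r] ++ tumbleWord e f := by
  have := one_le_left_of_det hdet
  have := one_le_right_of_det hdet
  rw [tumbleWord_eq_map, sort_crossingTimes_add hdet hd he, List.map_append, List.map_cons,
    List.map_cons, crossingLetter_div_of_coprime (coprime_add_of_det hdet) hd (by omega),
    crossingLetter_div_self (by omega), tumbleWord_eq_map c d, tumbleWord_eq_map e f]
  simp only [List.map_map, List.append_assoc, List.cons_append, List.nil_append]
  congr 1
  · exact List.map_congr_left fun t ht => crossingLetter_leftLift hdet ((Finset.mem_sort _).1 ht)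
  · congr 2
    exact List.map_congr_left fun t ht => crossingLetter_rightLift hdet ((Finset.mem_sort _).1 ht)

end Splice

lemma fullOrient_add {c d e f : ℕ} (hdet : c * f = d * e + 1) :
    fullOrient (c + e, d + f) = fullOrient (e, f) * fullOrient (c, d) := by
  rcases Nat.eq_zero_or_pos d with rfl | hd
  · obtain ⟨rfl, rfl⟩ : c = 1 ∧ f = 1 := by simpa using hdet
    rw [zero_add, fullOrient_nat_one, fullOrient_nat_one, fullOrient_one_nat, add_comm, pow_succ,
      pow_zero, one_mul, mul_assoc]
  rcases Nat.eq_zero_or_pos e with rfl | he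
  · obtain ⟨rfl, rfl⟩ : c = 1 ∧ f = 1 := by simpa using hdet
    rw [add_zero, fullOrient_one_nat, fullOrient_one_nat, fullOrient_nat_one, pow_succ', pow_zero,
      mul_one, mul_assoc]
  have hc := one_le_left_of_det hdet
  have hf := one_le_right_of_det hdet
  rw [fullOrient, fullOrient, fullOrient, sigmaPt_eq_orient (by omega) (by omega),
    sigmaPt_eq_orient hc hd, sigmaPt_eq_orient he hf, tumbleWord_add hdet hd he, orient_append,
    orient_append]
  simp only [orient, List.foldl, toPerm, mul_one, mul_assoc]

lemma sb_append_true (w : List Bool) :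
    sb (w ++ [true]) = ((sb w).1 + (sb w).2.1, (sb w).2.1, (sb w).1) := by
  rw [sb, List.foldl_append]
  rfl

lemma sb_append_false (w : List Bool) :
    sb (w ++ [false]) = ((sb w).1 + (sb w).2.2, (sb w).1, (sb w).2.2) := by
  rw [sb, List.foldl_append]
  rfl

lemma sb_fst_eq_add (w : List Bool) : (sb w).1 = (sb w).2.1 + (sb w).2.2 := by
  obtain rfl | ⟨v, ε, rfl⟩ := w.eq_nil_or_concat
  · rfl
  · rw [List.concat_eq_append]
    cases ε
    · rw [sb_append_false]
    · rw [sb_append_true, add_comm]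

lemma sb_det (w : List Bool) :
    (sb w).2.2.1 * (sb w).2.1.2 = (sb w).2.2.2 * (sb w).2.1.1 + 1 := by
  induction w using List.reverseRecOn with
  | nil => rfl
  | append_singleton w ε ih =>
    have h := sb_fst_eq_add w
    rw [Prod.ext_iff, Prod.fst_add, Prod.snd_add] at h
    cases ε <;> simp only [sb_append_false, sb_append_true, h.1, h.2] <;> nlinarith

def nodeOrient (w : List Bool) : Equiv.Perm (Fin 4) := fullOrient (sb w).1

def posParentOrient (w : List Bool) : Equiv.Perm (Fin 4) := fullOrient (sb w).2.1

def negParentOrient (w : List Bool) : Equiv.Perm (Fin 4) := fullOrient (sb w).2.2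

lemma posParentOrient_append_true (w : List Bool) :
    posParentOrient (w ++ [true]) = posParentOrient w := by
  rw [posParentOrient, sb_append_true]; rfl

lemma negParentOrient_append_true (w : List Bool) :
    negParentOrient (w ++ [true]) = nodeOrient w := by
  rw [negParentOrient, sb_append_true]; rfl

lemma posParentOrient_append_false (w : List Bool) :
    posParentOrient (w ++ [false]) = nodeOrient w := by
  rw [posParentOrient, sb_append_false]; rfl

lemma negParentOrient_append_false (w : List Bool) :
    negParentOrient (w ++ [false]) = negParentOrient w := by
  rw [negParentOrient, sb_append_false]; rfl

lemma nodeOrient_eq_mul (w : List Bool) : nodeOrient w = posParentOrient w * negParentOrient w := by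
  rw [nodeOrient, sb_fst_eq_add, add_comm]
  exact fullOrient_add (sb_det w)

open scoped commutatorElement in
/-- The commutator is invariant under the Nielsen moves `(N, P) ↦ (P N, P)` and
`(N, P) ↦ (N, P N)` by which the parents' orientations change along the tree. -/
lemma commutator_negParentOrient_posParentOrient (w : List Bool) :
    ⁅(negParentOrient w)⁻¹, posParentOrient w⁆ = ⁅ρ⁻¹, υ⁆ := by
  induction w using List.reverseRecOn with
  | nil =>
    simp only [negParentOrient, posParentOrient, sb, List.foldl_nil]
    rw [fullOrient_one_nat, fullOrient_nat_one, pow_zero, pow_zero, one_mul, mul_one]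
  | append_singleton w ε ih =>
    rw [← ih]
    cases ε <;>
      simp only [posParentOrient_append_false, negParentOrient_append_false,
        posParentOrient_append_true, negParentOrient_append_true, nodeOrient_eq_mul,
        commutatorElement_def] <;>
      group

lemma σnode_eq (w : List Bool) : σnode w = υ⁻¹ * nodeOrient w * ρ⁻¹ := by
  rw [σnode, nodeOrient, fullOrient]
  group

def grandchildOrient (s t : Equiv.Perm (Fin 4)) : Bool → Bool → Equiv.Perm (Fin 4)
  | true, true => t * s⁻¹ * t
  | true, false => s * υ * ρ * t
  | false, false => t * s⁻¹ * t
  | false, true => s * ρ * υ * t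

lemma σnode_append_pair (w : List Bool) (ε ε' : Bool) :
    σnode (w ++ [ε, ε']) = grandchildOrient (σnode w) (σnode (w ++ [ε])) ε ε' := by
  have hc := commutator_negParentOrient_posParentOrient w
  simp only [commutatorElement_def, inv_inv] at hc
  rw [show w ++ [ε, ε'] = w ++ [ε] ++ [ε'] by simp]
  cases ε <;> cases ε' <;>
    simp only [grandchildOrient, σnode_eq, nodeOrient_eq_mul, posParentOrient_append_true,
      negParentOrient_append_true, posParentOrient_append_false, negParentOrient_append_false]
  · group
  · group
  · calc _ = υ⁻¹ * (posParentOrient w * negParentOrient w) *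
          ((negParentOrient w)⁻¹ * posParentOrient w * negParentOrient w * (posParentOrient w)⁻¹) *
          (posParentOrient w * (posParentOrient w * negParentOrient w)) * ρ⁻¹ := by group
      _ = _ := by rw [hc]; group
  · group

/-- In Mathlib `(f * g) x = f (g x)`, so the left-to-right product `σ(t)·ρ·υ·σ(s)` of the
paper is written `σnode s * υ * ρ * σnode t`. -/
theorem child_edge_labels (w : List Bool) :
    ((σnode (w ++ [true, true]) =
          σnode (w ++ [true]) * (σnode w)⁻¹ * σnode (w ++ [true]) ∧
        σnode (w ++ [true, false]) = σnode w * υ * ρ * σnode (w ++ [true])) ∧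
      (σnode (w ++ [false, false]) =
          σnode (w ++ [false]) * (σnode w)⁻¹ * σnode (w ++ [false]) ∧
        σnode (w ++ [false, true]) = σnode w * ρ * υ * σnode (w ++ [false]))) ∧
      (∀ w' : List Bool, ∀ ε : Bool, σnode w = σnode w' →
        σnode (w ++ [ε]) = σnode (w' ++ [ε]) →
        ∀ ε' : Bool, σnode (w ++ [ε, ε']) = σnode (w' ++ [ε, ε'])) := by
  refine ⟨⟨⟨σnode_append_pair w true true, σnode_append_pair w true false⟩,
    σnode_append_pair w false false, σnode_append_pair w false true⟩, ?_⟩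
  intro w' ε hs ht ε'
  rw [σnode_append_pair, σnode_append_pair, hs, ht]
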